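/- arXiv:1903.00051 — 3 statements merged into one kernel-verified Lean document; each statement's English description precedes it below -/
import Mathlib

section
/- Let A be a uniform algebra on a compact Hausdorff space Y and let p ∈ Y be a p-point of A. Then for every f in the maximal ideal I_p = {f ∈ A : f(p) = 0} and every ε > 0 there exists u ∈ I_p with ‖u‖_∞ ≤ 2 and ‖f − fu‖_∞ < ε. -/
/-!
Compactness turns the intersection of peak sets defining `p` into a finite one, and a finite
intersection of peak sets is a peak set (multiply the peak functions). This gives `G ∈ A` with
`G p = 1`, `|G| ≤ 1`, and `|G| < 1` off the open set where `|f| < ε`. Then `u = 1 - G ^ k`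
satisfies `‖u‖ ≤ 2`, `u p = 0`, and `f - f u = f G ^ k` is uniformly small for large `k`.
-/

open ContinuousMap

/-- A peak set of a uniform algebra `A` on `Y`: a closed set `P` such that some `f ∈ A`
equals `1` on `P` and has modulus strictly less than `1` off `P`. -/
def IsPeakSet {Y : Type*} [TopologicalSpace Y] (A : Subalgebra ℂ C(Y, ℂ)) (P : Set Y) : Prop :=
  IsClosed P ∧ ∃ f ∈ A, (∀ y ∈ P, f y = 1) ∧ ∀ y ∉ P, ‖f y‖ < 1

/-- A `p`-point of `A`: a point whose singleton is an intersection of peak sets of `A`.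
The strong boundary of `A` is the set of all `p`-points. -/
def IsPPoint {Y : Type*} [TopologicalSpace Y] (A : Subalgebra ℂ C(Y, ℂ)) (p : Y) : Prop :=
  ∃ Ps : Set (Set Y), (∀ P ∈ Ps, IsPeakSet A P) ∧ ⋂₀ Ps = {p}

theorem norm_le_one_of_peaks {Y : Type*} [TopologicalSpace Y] {P : Set Y} {g : C(Y, ℂ)}
    (hg₁ : ∀ y ∈ P, g y = 1) (hglt : ∀ y ∉ P, ‖g y‖ < 1) (y : Y) : ‖g y‖ ≤ 1 := by
  by_cases hy : y ∈ P
  · simp [hg₁ y hy]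
  · exact (hglt y hy).le

namespace IsPeakSet

variable {Y : Type*} [TopologicalSpace Y] {A : Subalgebra ℂ C(Y, ℂ)}

theorem univ : IsPeakSet A Set.univ :=
  ⟨isClosed_univ, 1, A.one_mem, fun _ _ => rfl, fun y hy => absurd (Set.mem_univ y) hy⟩

theorem inter {P Q : Set Y} (hP : IsPeakSet A P) (hQ : IsPeakSet A Q) :
    IsPeakSet A (P ∩ Q) := by
  obtain ⟨hPc, f, hfA, hf₁, hflt⟩ := hP
  obtain ⟨hQc, g, hgA, hg₁, hglt⟩ := hQ
  refine ⟨hPc.inter hQc, f * g, A.mul_mem hfA hgA, fun y hy => ?_, fun y hy => ?_⟩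
  · simp [hf₁ y hy.1, hg₁ y hy.2]
  have hf := norm_le_one_of_peaks hf₁ hflt y
  have hg := norm_le_one_of_peaks hg₁ hglt y
  rw [mul_apply, norm_mul]
  by_cases hyP : y ∈ P
  · have hyQ : y ∉ Q := fun hyQ => hy ⟨hyP, hyQ⟩
    calc ‖f y‖ * ‖g y‖ ≤ 1 * ‖g y‖ := by gcongr
      _ < 1 := by rw [one_mul]; exact hglt y hyQ
  · calc ‖f y‖ * ‖g y‖ ≤ ‖f y‖ * 1 := by gcongr
      _ < 1 := by rw [mul_one]; exact hflt y hyP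

theorem biInter_finset {ι : Type*} (t : Finset ι) {P : ι → Set Y}
    (hP : ∀ i ∈ t, IsPeakSet A (P i)) : IsPeakSet A (⋂ i ∈ t, P i) := by
  classical
  induction t using Finset.induction_on with
  | empty => simpa using univ
  | insert i t _ ih =>
    rw [Finset.set_biInter_insert]
    exact (hP i (t.mem_insert_self i)).inter (ih fun j hj => hP j (Finset.mem_insert_of_mem hj))

end IsPeakSet

theorem IsPPoint.exists_isPeakSet_subset {Y : Type*} [TopologicalSpace Y] [CompactSpace Y]
    {A : Subalgebra ℂ C(Y, ℂ)} {p : Y} (hp : IsPPoint A p) {U : Set Y} (hU : IsOpen U)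
    (hpU : p ∈ U) : ∃ P, IsPeakSet A P ∧ p ∈ P ∧ P ⊆ U := by
  obtain ⟨Ps, hPs, hInter⟩ := hp
  have hdisj : Uᶜ ∩ ⋂ P : Ps, (P : Set Y) = ∅ := by
    rw [← Set.sInter_eq_iInter, hInter, Set.inter_singleton_eq_empty, Set.mem_compl_iff, not_not]
    exact hpU
  obtain ⟨t, ht⟩ := hU.isClosed_compl.isCompact.elim_finite_subfamily_closed _
    (fun P : Ps => (hPs P P.2).1) hdisj
  refine ⟨_, IsPeakSet.biInter_finset t fun P _ => hPs P P.2, ?_, ?_⟩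
  · have hp : p ∈ ⋂₀ Ps := hInter ▸ rfl
    exact Set.mem_iInter₂.2 fun P _ => hp P P.2
  · intro y hy
    by_contra hyU
    exact (Set.eq_empty_iff_forall_notMem.1 ht) y ⟨hyU, hy⟩

theorem IsCompact.exists_forall_norm_pow_lt {Y : Type*} [TopologicalSpace Y] {K : Set Y}
    (hK : IsCompact K) {g : C(Y, ℂ)} (hg : ∀ y ∈ K, ‖g y‖ < 1) {δ : ℝ} (hδ : 0 < δ) :
    ∃ k : ℕ, ∀ y ∈ K, ‖g y‖ ^ k < δ := by
  rcases K.eq_empty_or_nonempty with rfl | hne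
  · exact ⟨0, by simp⟩
  obtain ⟨y₀, hy₀, hmax⟩ := hK.exists_isMaxOn hne (continuous_norm.comp g.continuous).continuousOn
  obtain ⟨k, hk⟩ := exists_pow_lt_of_lt_one hδ (hg y₀ hy₀)
  exact ⟨k, fun y hy => (pow_le_pow_left₀ (norm_nonneg _) (hmax hy) k).trans_lt hk⟩

section CompactSpace

variable {Y : Type*} [TopologicalSpace Y] [CompactSpace Y]

theorem norm_one_sub_pow_le_two {g : C(Y, ℂ)} (hg : ∀ y, ‖g y‖ ≤ 1) (k : ℕ) :
    ‖1 - g ^ k‖ ≤ 2 := by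
  refine (ContinuousMap.norm_le _ zero_le_two).2 fun y => ?_
  calc ‖(1 - g ^ k) y‖ ≤ ‖(1 : ℂ)‖ + ‖g y‖ ^ k := by
        simpa [norm_pow] using norm_sub_le (1 : ℂ) (g y ^ k)
    _ ≤ 1 + 1 := by rw [norm_one]; gcongr; exact pow_le_one₀ (norm_nonneg _) (hg y)
    _ = 2 := one_add_one_eq_two

/-- `f * g ^ k` is small where `f` is, because `‖g‖ ≤ 1`, and elsewhere because `g ^ k` is. -/
theorem norm_mul_pow_lt {f g : C(Y, ℂ)} {ε : ℝ} (hε : 0 < ε) (hg : ∀ y, ‖g y‖ ≤ 1) {k : ℕ}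
    (hgk : ∀ y, ε ≤ ‖f y‖ → ‖g y‖ ^ k < ε / (‖f‖ + 1)) : ‖f * g ^ k‖ < ε := by
  refine (ContinuousMap.norm_lt_iff _ hε).2 fun y => ?_
  rw [mul_apply, pow_apply, norm_mul, norm_pow]
  by_cases hy : ‖f y‖ < ε
  · calc ‖f y‖ * ‖g y‖ ^ k ≤ ‖f y‖ * 1 := by
          gcongr; exact pow_le_one₀ (norm_nonneg _) (hg y)
      _ < ε := by rwa [mul_one]
  · have hf : 0 < ‖f‖ + 1 := by positivity
    calc ‖f y‖ * ‖g y‖ ^ k ≤ (‖f‖ + 1) * ‖g y‖ ^ k := by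
          gcongr; exact (f.norm_coe_le_norm y).trans (le_add_of_nonneg_right zero_le_one)
      _ < (‖f‖ + 1) * (ε / (‖f‖ + 1)) := by gcongr; exact hgk y (not_lt.1 hy)
      _ = ε := mul_div_cancel₀ ε hf.ne'

end CompactSpace

theorem stmt1_general {Y : Type*} [TopologicalSpace Y] [CompactSpace Y]
    (A : Subalgebra ℂ C(Y, ℂ))
    (p : Y) (hp : IsPPoint A p)
    (f : C(Y, ℂ)) (hfp : f p = 0)
    (ε : ℝ) (hε : 0 < ε) :
    ∃ u ∈ A, u p = 0 ∧ ‖u‖ ≤ 2 ∧ ‖f - f * u‖ < ε := by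
  set U : Set Y := {y | ‖f y‖ < ε}
  have hU : IsOpen U := isOpen_lt (continuous_norm.comp f.continuous) continuous_const
  have hpU : p ∈ U := by simpa [U, hfp] using hε
  obtain ⟨P, ⟨-, G, hGA, hG₁, hGlt⟩, hpP, hPU⟩ := hp.exists_isPeakSet_subset hU hpU
  have hG := norm_le_one_of_peaks hG₁ hGlt
  obtain ⟨k, hk⟩ := hU.isClosed_compl.isCompact.exists_forall_norm_pow_lt
    (fun y hy => hGlt y fun hyP => hy (hPU hyP)) (δ := ε / (‖f‖ + 1)) (by positivity)
  refine ⟨1 - G ^ k, A.sub_mem A.one_mem (pow_mem hGA k), by simp [hG₁ p hpP],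
    norm_one_sub_pow_le_two hG k, ?_⟩
  rw [show f - f * (1 - G ^ k) = f * G ^ k by ring]
  exact norm_mul_pow_lt hε hG fun y hy => hk y (not_lt.2 hy)

/-- If `A` is a uniform algebra on a compact Hausdorff space `Y` and
`p ∈ Y` is a `p`-point of `A`, then for every `f` in the maximal ideal
`I_p = {f ∈ A : f p = 0}` and every `ε > 0` there is `u ∈ I_p` with `‖u‖ ≤ 2` and
`‖f - f·u‖ < ε`. -/
theorem stmt1 {Y : Type*} [TopologicalSpace Y] [CompactSpace Y] [T2Space Y]
    (A : Subalgebra ℂ C(Y, ℂ)) (hA : IsClosed (A : Set C(Y, ℂ)))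
    (hsep : ∀ y z : Y, y ≠ z → ∃ f ∈ A, f y ≠ f z)
    (p : Y) (hp : IsPPoint A p)
    (f : C(Y, ℂ)) (hf : f ∈ A) (hfp : f p = 0)
    (ε : ℝ) (hε : 0 < ε) :
    ∃ u ∈ A, u p = 0 ∧ ‖u‖ ≤ 2 ∧ ‖f - f * u‖ < ε :=
  stmt1_general A p hp f hfp ε hε
end

section
/- If a semicharacter ψ ∈ Ŝ belongs to the strong boundary Γ of the uniform algebra A(Ŝ), then |ψ| is an idempotent semicharacter, i.e. |ψ| ∈ E(Ŝ). -/
open Complex Topology Set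

/-- The compact semigroup `Ŝ` of semicharacters of a discrete abelian monoid `S`:
nonzero homomorphisms into the multiplicative semigroup of the closed unit disc,
realized as the set of functions `ψ : S → ℂ` with `ψ 1 = 1`, multiplicative, and
of modulus at most one, endowed with the topology of pointwise convergence. -/
def Shat (S : Type*) [CommMonoid S] : Set (S → ℂ) :=
  {ψ | ψ 1 = 1 ∧ (∀ s t, ψ (s * t) = ψ s * ψ t) ∧ ∀ s, ‖ψ s‖ ≤ 1}

/-- The group `X` of characters of `S`: semicharacters of modulus one. -/
def charGroup (S : Type*) [CommMonoid S] : Set (S → ℂ) :=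
  {ψ | ψ ∈ Shat S ∧ ∀ s, ‖ψ s‖ = 1}

/-- `Ŝ₊`: the set of nonnegative semicharacters of `S`. -/
def ShatPos (S : Type*) [CommMonoid S] : Set (S → ℂ) :=
  {ψ | ψ ∈ Shat S ∧ ∀ s, (ψ s).im = 0 ∧ 0 ≤ (ψ s).re}

/-- `E(Ŝ)`: the set of idempotent semicharacters (taking only the values `0` and `1`). -/
def idemSC (S : Type*) [CommMonoid S] : Set (S → ℂ) :=
  {ψ | ψ ∈ Shat S ∧ ∀ s, ψ s = 0 ∨ ψ s = 1}

/-- The modulus `|ψ|` of a semicharacter. -/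
noncomputable def scMod {S : Type*} (ψ : S → ℂ) : S → ℂ :=
  fun s => (‖ψ s‖ : ℂ)

/-- The power `ρ^z` of a nonnegative semicharacter `ρ` (with `0^z := 0`). -/
noncomputable def scPow {S : Type*} (ρ : S → ℂ) (z : ℂ) : S → ℂ :=
  fun s => if ρ s = 0 then 0 else ρ s ^ z

/-- A function `F` on `Ŝ` is generalized analytic on `Ŝ ∖ X` if for all
`ρ ∈ Ŝ₊ ∖ X` and `ψ ∈ Ŝ ∖ X` the map `z ↦ F (ρ^z ψ)` is analytic on the open
right half-plane and continuous at `0` along `(0, ∞)`. -/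
def GenAnalytic (S : Type*) [CommMonoid S] (F : (S → ℂ) → ℂ) : Prop :=
  ∀ ρ ∈ ShatPos S \ charGroup S, ∀ ψ ∈ Shat S \ charGroup S,
    DifferentiableOn ℂ (fun z : ℂ => F (scPow ρ z * ψ)) {z : ℂ | 0 < z.re} ∧
    ContinuousWithinAt (fun t : ℝ => F (scPow ρ (t : ℂ) * ψ)) (Set.Ioi (0 : ℝ)) 0

/-- Membership in the uniform algebra `A(Ŝ)`: continuous on `Ŝ` and generalized
analytic on `Ŝ ∖ X`. -/
def MemA (S : Type*) [CommMonoid S] (F : (S → ℂ) → ℂ) : Prop :=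
  ContinuousOn F (Shat S) ∧ GenAnalytic S F

/-- Peak sets of the algebra `A(Ŝ)`. -/
def IsPeakSetA (S : Type*) [CommMonoid S] (P : Set (S → ℂ)) : Prop :=
  P ⊆ Shat S ∧ IsClosed P ∧
    ∃ f, MemA S f ∧ (∀ ψ ∈ P, f ψ = 1) ∧ ∀ ψ ∈ Shat S \ P, ‖f ψ‖ < 1

/-- `p`-points of the algebra `A(Ŝ)`: points of `Ŝ` that are intersections of peak sets. -/
def IsPPointA (S : Type*) [CommMonoid S] (p : S → ℂ) : Prop :=
  p ∈ Shat S ∧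
    ∃ Ps : Set (Set (S → ℂ)), (∀ P ∈ Ps, IsPeakSetA S P) ∧ ⋂₀ Ps = {p}

/-- The strong boundary `Γ` of `A(Ŝ)`: the set of all `p`-points. -/
def strongBoundary (S : Type*) [CommMonoid S] : Set (S → ℂ) :=
  {ψ | IsPPointA S ψ}

/-- The coset `ρX` of the character group. -/
def cosetX (S : Type*) [CommMonoid S] (ρ : S → ℂ) : Set (S → ℂ) :=
  {φ | ∃ χ ∈ charGroup S, φ = ρ * χ}

/-- `E₀(Ŝ)`: idempotents `ρ₀` admitting `ρ₁ ∈ Ŝ₊` with `ρ₁ = 1` on `S(ρ₀)` and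
`0 < ρ₁ < 1` off `S(ρ₀)`. -/
def E0 (S : Type*) [CommMonoid S] : Set (S → ℂ) :=
  {ρ₀ | ρ₀ ∈ idemSC S ∧ ∃ ρ₁ ∈ ShatPos S,
    (∀ s, ρ₀ s ≠ 0 → ρ₁ s = 1) ∧ ∀ s, ρ₀ s = 0 → 0 < (ρ₁ s).re ∧ (ρ₁ s).re < 1}

/-- `θ`: the indicator function of `{e}`. -/
noncomputable def theta (S : Type*) [CommMonoid S] : S → ℂ :=
  ({1} : Set S).indicator 1

/-- A closed boundary of `A(Ŝ)`: a closed subset of `Ŝ` on which every function of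
`A(Ŝ)` attains its maximum modulus over `Ŝ`. -/
def IsClosedBoundaryA (S : Type*) [CommMonoid S] (B : Set (S → ℂ)) : Prop :=
  B ⊆ Shat S ∧ IsClosed B ∧
    ∀ f, MemA S f → ∃ ψ ∈ B, ∀ φ ∈ Shat S, ‖f φ‖ ≤ ‖f ψ‖

/-- The Shilov boundary of `A(Ŝ)`: the smallest closed boundary. -/
def shilovA (S : Type*) [CommMonoid S] : Set (S → ℂ) :=
  ⋂₀ {B | IsClosedBoundaryA S B}

/-- An ideal of the semigroup `S`: a nonempty proper subset stable under multiplication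
by `S`. -/
def IsIdealS (S : Type*) [CommMonoid S] (I : Set S) : Prop :=
  I.Nonempty ∧ I ≠ Set.univ ∧ ∀ s : S, ∀ a ∈ I, s * a ∈ I

/-- A simple ideal: an ideal whose complement is a subsemigroup. -/
def IsSimpleIdealS (S : Type*) [CommMonoid S] (I : Set S) : Prop :=
  IsIdealS S I ∧ ∀ a b : S, a ∉ I → b ∉ I → a * b ∉ I

/-!
If `0 < |ψ s₀| < 1`, the semicharacters `ψ_z = |ψ|^z · ψ / |ψ|` (`Re z > 0`) form an analytic
half-plane through `ψ = ψ_1`. A peak function of a peak set containing `ψ` is analytic along it,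
bounded by `1` and equal to `1` at `ψ_1`, hence identically `1` by the maximum modulus principle:
every `ψ_z` lies in every peak set containing `ψ`. For a `p`-point `ψ` this forces `ψ_2 = ψ`, i.e.
`|ψ s₀|² = |ψ s₀|`, which is absurd.
-/

section

variable {S : Type*} {ψ : S → ℂ}

/-- The ray `z ↦ |ψ|^z · (ψ / |ψ|)` through `ψ = scOrbit ψ 1`; the zeros of `ψ` are kept since
`0 * 0 ^ w = 0`. -/
noncomputable def scOrbit (ψ : S → ℂ) (z : ℂ) : S → ℂ :=
  fun s => ψ s * (‖ψ s‖ : ℂ) ^ (z - 1)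

@[simp]
theorem scOrbit_one : scOrbit ψ 1 = ψ := by
  funext s
  simp [scOrbit]

theorem scPow_scMod_mul_scOrbit (z w : ℂ) :
    scPow (scMod ψ) z * scOrbit ψ w = scOrbit ψ (z + w) := by
  funext s
  by_cases hs : ψ s = 0
  · simp [scPow, scMod, scOrbit, hs]
  · have hne : (‖ψ s‖ : ℂ) ≠ 0 := by simpa using hs
    simp only [Pi.mul_apply, scPow, scMod, scOrbit, hne, if_false]
    rw [show z + w - 1 = z + (w - 1) by ring, cpow_add _ _ hne]
    ring

theorem norm_scOrbit_apply {s : S} (hs : ψ s ≠ 0) (z : ℂ) :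
    ‖scOrbit ψ z s‖ = ‖ψ s‖ ^ z.re := by
  have hpos : 0 < ‖ψ s‖ := norm_pos_iff.mpr hs
  rw [scOrbit, norm_mul, norm_cpow_eq_rpow_re_of_pos hpos, sub_re, one_re,
    Real.rpow_sub_one hpos.ne']
  field_simp

variable [CommMonoid S]

theorem scMod_mem_shatPos (hψ : ψ ∈ Shat S) : scMod ψ ∈ ShatPos S := by
  obtain ⟨h1, hmul, hle⟩ := hψ
  refine ⟨⟨by simp [scMod, h1], fun s t => by simp [scMod, hmul], fun s => ?_⟩,
    fun s => by simp [scMod]⟩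
  simpa [scMod] using hle s

theorem exists_norm_pos_lt_one_of_scMod_notMem_idemSC (hψ : ψ ∈ Shat S)
    (h : scMod ψ ∉ idemSC S) : ∃ s, 0 < ‖ψ s‖ ∧ ‖ψ s‖ < 1 := by
  by_contra! hs
  refine h ⟨(scMod_mem_shatPos hψ).1, fun s => ?_⟩
  rcases (norm_nonneg (ψ s)).eq_or_lt with h0 | h0
  · simp [scMod, ← h0]
  · simp [scMod, le_antisymm (hψ.2.2 s) (hs s h0)]

theorem notMem_charGroup_of_norm_lt_one {φ : S → ℂ} {s : S} (h : ‖φ s‖ < 1) :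
    φ ∉ charGroup S :=
  fun hφ => h.ne (hφ.2 s)

theorem scOrbit_mem_shat (hψ : ψ ∈ Shat S) {z : ℂ} (hz : 0 ≤ z.re) : scOrbit ψ z ∈ Shat S := by
  obtain ⟨h1, hmul, hle⟩ := hψ
  refine ⟨by simp [scOrbit, h1], fun s t => ?_, fun s => ?_⟩
  · simp only [scOrbit, hmul, norm_mul, ofReal_mul,
      mul_cpow_ofReal_nonneg (norm_nonneg _) (norm_nonneg _)]
    ring
  · by_cases hs : ψ s = 0
    · simp [scOrbit, hs]
    · rw [norm_scOrbit_apply hs]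
      exact Real.rpow_le_one (norm_nonneg _) (hle s) hz

/-- `w ↦ f (scOrbit ψ (w + t))` is analytic on the right half-plane because
`scOrbit ψ (w + t) = |ψ|^w · scOrbit ψ t` with `|ψ|` and `scOrbit ψ t` off `X` (at `s₀`), so the
maximum modulus principle applies. -/
theorem apply_scOrbit_eq_one {f : (S → ℂ) → ℂ} (hf : MemA S f)
    (hf_le : ∀ φ ∈ Shat S, ‖f φ‖ ≤ 1) (hψ : ψ ∈ Shat S) (hfψ : f ψ = 1) {s₀ : S}
    (hs₀ : 0 < ‖ψ s₀‖) (hs₀' : ‖ψ s₀‖ < 1) {z : ℂ} (hz : 0 < z.re) :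
    f (scOrbit ψ z) = 1 := by
  obtain ⟨t, ht, htmin⟩ := exists_between (lt_min one_pos hz)
  obtain ⟨ht1, htz⟩ := lt_min_iff.mp htmin
  have hψs₀ : ψ s₀ ≠ 0 := norm_pos_iff.mp hs₀
  have hρ : scMod ψ ∈ ShatPos S \ charGroup S :=
    ⟨scMod_mem_shatPos hψ, notMem_charGroup_of_norm_lt_one (s := s₀) (by simpa [scMod] using hs₀')⟩
  have hbase : scOrbit ψ t ∈ Shat S \ charGroup S := by
    refine ⟨scOrbit_mem_shat hψ (by simpa using ht.le), notMem_charGroup_of_norm_lt_one (s := s₀) ?_⟩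
    rw [norm_scOrbit_apply hψs₀, ofReal_re]
    exact Real.rpow_lt_one hs₀.le hs₀' ht
  set U : Set ℂ := {w | 0 < w.re}
  set g : ℂ → ℂ := fun w => f (scOrbit ψ (w + t))
  have hg : DifferentiableOn ℂ g U := by
    have := (hf.2 _ hρ _ hbase).1
    simpa only [scPow_scMod_mul_scOrbit] using this
  have hmem : ((1 - t : ℝ) : ℂ) ∈ U := by simp [U, ht1]
  have hmax : IsMaxOn (‖g ·‖) U ((1 - t : ℝ) : ℂ) := by
    intro w hw
    have hw' : 0 ≤ (w + t).re := by simp only [add_re, ofReal_re]; linarith [show 0 < w.re from hw]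
    simpa [g, hfψ] using hf_le _ (scOrbit_mem_shat hψ hw')
  have hconst := Complex.eqOn_of_isPreconnected_of_isMaxOn_norm
    (convex_halfSpace_re_gt 0).isPreconnected (isOpen_lt continuous_const continuous_re) hg hmem hmax
  have hz' : z - t ∈ U := by simp [U, htz]
  simpa [g, hfψ] using hconst hz'

theorem scOrbit_mem_of_isPeakSetA {P : Set (S → ℂ)} (hP : IsPeakSetA S P) (hψP : ψ ∈ P)
    {s₀ : S} (hs₀ : 0 < ‖ψ s₀‖) (hs₀' : ‖ψ s₀‖ < 1) {z : ℂ} (hz : 0 < z.re) :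
    scOrbit ψ z ∈ P := by
  obtain ⟨hPS, -, f, hf, hf1, hflt⟩ := hP
  have hf_le : ∀ φ ∈ Shat S, ‖f φ‖ ≤ 1 := fun φ hφ => by
    by_cases hφP : φ ∈ P
    · simp [hf1 φ hφP]
    · exact (hflt φ ⟨hφ, hφP⟩).le
  by_contra hzP
  have h1 := apply_scOrbit_eq_one hf hf_le (hPS hψP) (hf1 ψ hψP) hs₀ hs₀' hz
  simpa [h1] using hflt _ ⟨scOrbit_mem_shat (hPS hψP) hz.le, hzP⟩

theorem scOrbit_eq_of_isPPointA (hψ : IsPPointA S ψ) {s₀ : S} (hs₀ : 0 < ‖ψ s₀‖)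
    (hs₀' : ‖ψ s₀‖ < 1) {z : ℂ} (hz : 0 < z.re) : scOrbit ψ z = ψ := by
  obtain ⟨-, Ps, hPs, hInt⟩ := hψ
  have hψP : ψ ∈ ⋂₀ Ps := hInt ▸ rfl
  have : scOrbit ψ z ∈ ⋂₀ Ps := fun P hP =>
    scOrbit_mem_of_isPeakSetA (hPs P hP) (hψP P hP) hs₀ hs₀' hz
  rwa [hInt] at this

end

theorem stmt4_general {S : Type*} [CommMonoid S]
    (ψ : S → ℂ) (hψ : ψ ∈ strongBoundary S) :
    scMod ψ ∈ idemSC S := by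
  by_contra h
  obtain ⟨s₀, hs₀, hs₀'⟩ := exists_norm_pos_lt_one_of_scMod_notMem_idemSC hψ.1 h
  have h2 := congrArg (‖· s₀‖) (scOrbit_eq_of_isPPointA hψ hs₀ hs₀' (z := 2) (by norm_num))
  simp only [norm_scOrbit_apply (norm_pos_iff.mp hs₀), re_ofNat, Real.rpow_two] at h2
  nlinarith

/-- If `ψ` belongs to the strong boundary of `A(Ŝ)` then `|ψ|` is an
idempotent semicharacter. -/
theorem stmt4 {S : Type*} [CommMonoid S] [IsCancelMul S]
    (ψ : S → ℂ) (hψ : ψ ∈ strongBoundary S) :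
    scMod ψ ∈ idemSC S :=
  stmt4_general ψ hψ
end

section
/- The strong boundary Γ of A(Ŝ) is a union of maximal subgroups of Ŝ: for every ψ ∈ Γ one has |ψ| ∈ E(Ŝ) and the whole coset |ψ|·X is contained in Γ. Consequently Γ = ⋃_{ρ ∈ F} ρX, where F = {|ψ| : ψ ∈ Γ} ⊆ E(Ŝ), and this union is disjoint. -/
open Complex Topology Set

/-!
A semicharacter `ψ` of a cancellative monoid factors as `ψ = |ψ| χ` with `χ` a character:
the partial character `ψ / |ψ|` on the support of `ψ` extends to the Grothendieck group of `S`
because the circle group is divisible. Multiplication by a character is a homeomorphism of `Ŝ`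
preserving `A(Ŝ)`, so it permutes peak sets and `p`-points; hence each coset `ψX = |ψ|X` of a
`p`-point consists of `p`-points, and these cosets are disjoint since `|ψ|` is constant on them.

If `ψ` is a `p`-point and `0 < |ψ(s₀)| < 1`, put `ρ = |ψ|`. The analytic disc
`z ↦ ρ^z ρ^{1/2} χ` passes through `ψ` at the interior point `z = 1/2` of the half-plane, so by
the maximum modulus principle every peak function of a peak set through `ψ` is identically `1`
on it. Thus the whole disc lies in `{ψ}`, and comparing `z = 1/2` with `z = 3/2` at `s₀`
gives `|ψ(s₀)| = |ψ(s₀)|²`. Hence `|ψ|` is idempotent.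
-/

open Algebra

noncomputable instance : DivisibleBy (Additive Circle) ℤ :=
  Circle.exp_surjective.divisibleBy Circle.expHom fun x n => map_zsmul Circle.expHom n x

lemma Algebra.GrothendieckGroup.lift_of {M G : Type*} [CommMonoid M] [CommGroup G]
    (f : M →* G) (m : M) : lift f (of m) = f m :=
  DFunLike.congr_fun (lift.symm_apply_apply f) m

lemma Algebra.GrothendieckGroup.lift_of_comp_subtype_injective {S : Type*} [CommMonoid S]
    [IsCancelMul S] (M : Submonoid S) : Function.Injective (lift (of.comp M.subtype)) := by
  rw [injective_iff_map_eq_one]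
  intro z hz
  obtain ⟨⟨a, b, _⟩, hab⟩ := (Localization.monoidOf (⊤ : Submonoid M)).surj z
  change z * of b = of a at hab
  have hba : b = a := by
    have h := congrArg (lift (of.comp M.subtype)) hab
    rw [map_mul, hz, one_mul, lift_of, lift_of] at h
    exact Subtype.ext (of_injective h)
  rw [hba] at hab
  exact mul_eq_right.mp hab

lemma Submonoid.exists_monoidHom_extension {S G : Type*} [CommMonoid S] [IsCancelMul S]
    [CommGroup G] [DivisibleBy (Additive G) ℤ] (M : Submonoid S) (u : M →* G) :
    ∃ χ : S →* G, ∀ m : M, χ m = u m := by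
  obtain ⟨h, hh⟩ := (Module.Baer.of_divisible (Additive G)).extension_property_addMonoidHom
    (GrothendieckGroup.lift (GrothendieckGroup.of.comp M.subtype)).toAdditive
    (GrothendieckGroup.lift_of_comp_subtype_injective M) (GrothendieckGroup.lift u).toAdditive
  refine ⟨(MonoidHom.toAdditive.symm h).comp GrothendieckGroup.of, fun m => ?_⟩
  have := DFunLike.congr_fun hh (Additive.ofMul (GrothendieckGroup.of m))
  simp only [AddMonoidHom.coe_comp, Function.comp_apply, MonoidHom.coe_toAdditive,
    toMul_ofMul, GrothendieckGroup.lift_of] at this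
  exact congrArg Additive.toMul this

section Pointwise

variable {S : Type*}

lemma scMod_scMod (ψ : S → ℂ) : scMod (scMod ψ) = scMod ψ := by
  funext s
  simp [scMod]

lemma scPow_one (ρ : S → ℂ) : scPow ρ 1 = ρ := by
  funext s
  by_cases h : ρ s = 0 <;> simp [scPow, h]

lemma scPow_mul_scPow (ρ : S → ℂ) (a b : ℂ) : scPow ρ a * scPow ρ b = scPow ρ (a + b) := by
  funext s
  by_cases h : ρ s = 0 <;> simp [scPow, h, cpow_add]

end Pointwise

section Characters

variable {S : Type*} [CommMonoid S]

lemma mul_mem_Shat {ψ φ : S → ℂ} (hψ : ψ ∈ Shat S) (hφ : φ ∈ Shat S) : ψ * φ ∈ Shat S := by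
  obtain ⟨hψ1, hψm, hψb⟩ := hψ
  obtain ⟨hφ1, hφm, hφb⟩ := hφ
  refine ⟨by simp [hψ1, hφ1], fun s t => ?_, fun s => ?_⟩
  · simp only [Pi.mul_apply, hψm, hφm]
    ring
  · rw [Pi.mul_apply, norm_mul]
    exact mul_le_one₀ (hψb s) (norm_nonneg _) (hφb s)

lemma norm_mul_apply_of_mem_charGroup {η : S → ℂ} (hη : η ∈ charGroup S) (φ : S → ℂ) (s : S) :
    ‖(φ * η) s‖ = ‖φ s‖ := by
  rw [Pi.mul_apply, norm_mul, hη.2 s, mul_one]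

lemma mul_mem_charGroup {η₁ η₂ : S → ℂ} (h₁ : η₁ ∈ charGroup S) (h₂ : η₂ ∈ charGroup S) :
    η₁ * η₂ ∈ charGroup S :=
  ⟨mul_mem_Shat h₁.1 h₂.1, fun s => by rw [norm_mul_apply_of_mem_charGroup h₂, h₁.2 s]⟩

lemma star_mem_charGroup {η : S → ℂ} (hη : η ∈ charGroup S) : star η ∈ charGroup S := by
  obtain ⟨⟨h1, hm, -⟩, hn⟩ := hη
  refine ⟨⟨by simp [h1], fun s t => by simp [hm], fun s => ?_⟩, fun s => ?_⟩ <;>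
    simp [hn s]

lemma mul_star_self_of_mem_charGroup {η : S → ℂ} (hη : η ∈ charGroup S) : η * star η = 1 := by
  funext s
  rw [Pi.mul_apply, Pi.star_apply, Complex.star_def, Complex.mul_conj, Complex.normSq_eq_norm_sq,
    hη.2 s]
  simp

lemma mul_mul_star_of_mem_charGroup {η : S → ℂ} (hη : η ∈ charGroup S) (φ : S → ℂ) :
    φ * η * star η = φ := by
  rw [mul_assoc, mul_star_self_of_mem_charGroup hη, mul_one]

lemma mul_star_mul_of_mem_charGroup {η : S → ℂ} (hη : η ∈ charGroup S) (φ : S → ℂ) :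
    φ * star η * η = φ := by
  simpa using mul_mul_star_of_mem_charGroup (star_mem_charGroup hη) φ

lemma mem_Shat_of_mul_mem_Shat {φ η : S → ℂ} (hη : η ∈ charGroup S) (h : φ * η ∈ Shat S) :
    φ ∈ Shat S := by
  simpa [mul_mul_star_of_mem_charGroup hη] using mul_mem_Shat h (star_mem_charGroup hη).1

lemma mul_notMem_charGroup {φ η : S → ℂ} (hφ : φ ∉ charGroup S) (hη : η ∈ charGroup S)
    (hφη : φ * η ∈ Shat S) : φ * η ∉ charGroup S := fun h =>
  hφ ⟨mem_Shat_of_mul_mem_Shat hη hφη, fun s => by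
    rw [← norm_mul_apply_of_mem_charGroup hη, h.2 s]⟩

lemma MemA.comp_mul_right {f : (S → ℂ) → ℂ} (hf : MemA S f) {η : S → ℂ}
    (hη : η ∈ charGroup S) : MemA S fun φ => f (φ * η) := by
  refine ⟨hf.1.comp (continuous_mul_const η).continuousOn
    fun φ hφ => mul_mem_Shat hφ hη.1, fun ρ hρ ψ hψ => ?_⟩
  have hψη : ψ * η ∈ Shat S \ charGroup S := by
    have h := mul_mem_Shat hψ.1 hη.1
    exact ⟨h, mul_notMem_charGroup hψ.2 hη h⟩
  simpa only [mul_assoc] using hf.2 ρ hρ (ψ * η) hψη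

lemma IsPeakSetA.preimage_mul_right {P : Set (S → ℂ)} (hP : IsPeakSetA S P) {η : S → ℂ}
    (hη : η ∈ charGroup S) : IsPeakSetA S ((· * η) ⁻¹' P) := by
  obtain ⟨hPS, hPc, f, hf, hf1, hflt⟩ := hP
  refine ⟨fun φ hφ => mem_Shat_of_mul_mem_Shat hη (hPS hφ),
    hPc.preimage (continuous_mul_const η), _, hf.comp_mul_right hη,
    fun φ hφ => hf1 _ hφ, fun φ hφ => hflt _ ⟨mul_mem_Shat hφ.1 hη.1, hφ.2⟩⟩

lemma IsPPointA.mul_mem_charGroup {ψ η : S → ℂ} (hψ : IsPPointA S ψ) (hη : η ∈ charGroup S) :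
    IsPPointA S (ψ * η) := by
  obtain ⟨hψS, Ps, hPs, hInt⟩ := hψ
  have hη' := star_mem_charGroup hη
  refine ⟨mul_mem_Shat hψS hη.1, (fun P => (· * star η) ⁻¹' P) '' Ps, ?_, ?_⟩
  · rintro _ ⟨P, hP, rfl⟩
    exact (hPs P hP).preimage_mul_right hη'
  · rw [Set.sInter_image, ← Set.preimage_iInter₂, ← Set.sInter_eq_biInter, hInt]
    ext φ
    simp only [Set.mem_preimage, Set.mem_singleton_iff]
    constructor
    · intro h
      rw [← h, mul_star_mul_of_mem_charGroup hη]
    · rintro rfl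
      exact mul_mul_star_of_mem_charGroup hη ψ

end Characters

section Modulus

variable {S : Type*} [CommMonoid S]

lemma MonoidHom.coe_mem_charGroup (χ : S →* Circle) : (fun s => (χ s : ℂ)) ∈ charGroup S :=
  ⟨⟨by simp, fun s t => by simp, fun s => (Circle.norm_coe _).le⟩, fun s => Circle.norm_coe _⟩

lemma mem_cosetX_scMod [IsCancelMul S] {ψ : S → ℂ} (hψ : ψ ∈ Shat S) :
    ψ ∈ cosetX S (scMod ψ) := by
  obtain ⟨hψ1, hψm, -⟩ := hψ
  let M : Submonoid S :=
    { carrier := {s | ψ s ≠ 0}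
      mul_mem' := fun {a b} ha hb => show ψ (a * b) ≠ 0 by rw [hψm]; exact mul_ne_zero ha hb
      one_mem' := by simp [hψ1] }
  have hunit : ∀ s, ψ s ≠ 0 → ψ s / ‖ψ s‖ ∈ Submonoid.unitSphere ℂ := fun s hs => by
    simp [Submonoid.unitSphere, hs]
  let u : M →* Circle :=
    { toFun := fun m => (⟨ψ m / ‖ψ m‖, hunit m m.2⟩ : Circle)
      map_one' := Circle.ext <| by simp [hψ1]
      map_mul' := fun a b => Circle.ext <| by
        change ψ (a * b) / ‖ψ (a * b)‖ = ψ a / ‖ψ a‖ * (ψ b / ‖ψ b‖)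
        rw [hψm, norm_mul, ofReal_mul, div_mul_div_comm] }
  obtain ⟨χ, hχ⟩ := M.exists_monoidHom_extension u
  refine ⟨_, χ.coe_mem_charGroup, funext fun s => ?_⟩
  by_cases hs : ψ s = 0
  · simp [scMod, hs]
  · simp only [Pi.mul_apply, scMod, hχ ⟨s, hs⟩]
    change ψ s = ‖ψ s‖ * (ψ s / ‖ψ s‖)
    rw [mul_div_cancel₀ _ (by simpa using hs)]

lemma scMod_mem_ShatPos {ψ : S → ℂ} (hψ : ψ ∈ Shat S) : scMod ψ ∈ ShatPos S := by
  obtain ⟨hψ1, hψm, hψb⟩ := hψ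
  exact ⟨⟨by simp [scMod, hψ1], fun s t => by simp [scMod, hψm],
    fun s => by simpa [scMod] using hψb s⟩, fun s => by simp [scMod]⟩

lemma scMod_eq_of_mem_cosetX {φ ρ : S → ℂ} (hφ : φ ∈ cosetX S ρ) : scMod φ = scMod ρ := by
  obtain ⟨χ, hχ, rfl⟩ := hφ
  funext s
  simp only [scMod, norm_mul_apply_of_mem_charGroup hχ]

lemma cosetX_scMod_subset_cosetX [IsCancelMul S] {ψ : S → ℂ} (hψ : ψ ∈ Shat S) :
    cosetX S (scMod ψ) ⊆ cosetX S ψ := by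
  obtain ⟨χ, hχ, hψχ⟩ := mem_cosetX_scMod hψ
  rintro _ ⟨χ', hχ', rfl⟩
  refine ⟨star χ * χ', mul_mem_charGroup (star_mem_charGroup hχ) hχ', ?_⟩
  conv_rhs => rw [hψχ, ← mul_assoc, mul_mul_star_of_mem_charGroup hχ]

lemma IsPPointA.cosetX_scMod_subset [IsCancelMul S] {ψ : S → ℂ} (hψ : IsPPointA S ψ) :
    cosetX S (scMod ψ) ⊆ strongBoundary S := fun φ hφ => by
  obtain ⟨χ, hχ, rfl⟩ := cosetX_scMod_subset_cosetX hψ.1 hφ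
  exact hψ.mul_mem_charGroup hχ

end Modulus

section AnalyticDisc

variable {S : Type*} [CommMonoid S]

lemma scPow_mem_Shat {ρ : S → ℂ} (hρ : ρ ∈ ShatPos S) {z : ℂ} (hz : 0 < z.re) :
    scPow ρ z ∈ Shat S := by
  obtain ⟨⟨hρ1, hρm, hρb⟩, hρpos⟩ := hρ
  have hreal : ∀ s, ρ s = ((ρ s).re : ℂ) := fun s => Complex.ext rfl (by simp [(hρpos s).1])
  refine ⟨by simp [scPow, hρ1], fun s t => ?_, fun s => ?_⟩
  · by_cases hs : ρ s = 0
    · simp [scPow, hρm, hs]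
    by_cases ht : ρ t = 0
    · simp [scPow, hρm, ht]
    simp only [scPow, hρm, mul_ne_zero hs ht, hs, ht, if_false]
    rw [hreal s, hreal t]
    exact mul_cpow_ofReal_nonneg (hρpos s).2 (hρpos t).2 z
  · by_cases hs : ρ s = 0
    · simp [scPow, hs]
    have hle : (ρ s).re ≤ 1 := by
      have := hρb s
      rwa [hreal s, norm_real, Real.norm_of_nonneg (hρpos s).2] at this
    simp only [scPow, hs, if_false]
    rw [hreal s, norm_cpow_eq_rpow_re_of_nonneg (hρpos s).2 hz.ne']
    exact Real.rpow_le_one (hρpos s).2 hle hz.le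

lemma IsPeakSetA.scPow_mul_mem {P : Set (S → ℂ)} (hP : IsPeakSetA S P) {ρ φ : S → ℂ}
    (hρ : ρ ∈ ShatPos S \ charGroup S) (hφ : φ ∈ Shat S \ charGroup S) {z₀ z : ℂ}
    (hz₀ : 0 < z₀.re) (hz : 0 < z.re) (hmem : scPow ρ z₀ * φ ∈ P) : scPow ρ z * φ ∈ P := by
  obtain ⟨-, -, f, hf, hf1, hflt⟩ := hP
  have hdisc : ∀ w : ℂ, 0 < w.re → scPow ρ w * φ ∈ Shat S := fun w hw =>
    mul_mem_Shat (scPow_mem_Shat hρ.1 hw) hφ.1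
  have hmax : IsMaxOn (norm ∘ fun w => f (scPow ρ w * φ)) {w : ℂ | 0 < w.re} z₀ := by
    intro w hw
    change ‖f (scPow ρ w * φ)‖ ≤ ‖f (scPow ρ z₀ * φ)‖
    rw [hf1 _ hmem, norm_one]
    by_cases hwP : scPow ρ w * φ ∈ P
    · rw [hf1 _ hwP, norm_one]
    · exact (hflt _ ⟨hdisc w hw, hwP⟩).le
  have hconst := Complex.eqOn_of_isPreconnected_of_isMaxOn_norm
    (convex_halfSpace_re_gt 0).isPreconnected (isOpen_lt continuous_const continuous_re)
    (hf.2 ρ hρ φ hφ).1 hz₀ hmax hz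
  by_contra hzP
  have := hflt _ ⟨hdisc z hz, hzP⟩
  simp only [hconst, Function.const_apply, hf1 _ hmem, norm_one, lt_self_iff_false] at this

lemma IsPPointA.scPow_mul_eq {ρ φ : S → ℂ} {z₀ : ℂ} (hp : IsPPointA S (scPow ρ z₀ * φ))
    (hρ : ρ ∈ ShatPos S \ charGroup S) (hφ : φ ∈ Shat S \ charGroup S)
    (hz₀ : 0 < z₀.re) {z : ℂ} (hz : 0 < z.re) : scPow ρ z * φ = scPow ρ z₀ * φ := by
  obtain ⟨-, Ps, hPs, hInt⟩ := hp
  have hp₀ : scPow ρ z₀ * φ ∈ ⋂₀ Ps := by rw [hInt]; rfl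
  have hmem : scPow ρ z * φ ∈ ⋂₀ Ps := fun P hP =>
    (hPs P hP).scPow_mul_mem hρ hφ hz₀ hz (hp₀ P hP)
  rwa [hInt] at hmem

lemma IsPPointA.scMod_mem_idemSC [IsCancelMul S] {ψ : S → ℂ} (hψ : IsPPointA S ψ) :
    scMod ψ ∈ idemSC S := by
  set ρ := scMod ψ
  have hρ := scMod_mem_ShatPos hψ.1
  refine ⟨hρ.1, fun s₀ => ?_⟩
  by_contra! hs₀
  obtain ⟨χ, hχ, hψχ⟩ := mem_cosetX_scMod hψ.1
  have hρ₀ : ‖ρ s₀‖ ≠ 1 := by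
    simpa [ρ, scMod] using hs₀.2
  have hρX : ρ ∉ charGroup S := fun h => hρ₀ (h.2 s₀)
  set φ := scPow ρ (1 / 2) * χ
  have hφX : φ ∉ charGroup S := fun h => hρ₀ <| by
    have hhalf := h.2 s₀
    rw [norm_mul_apply_of_mem_charGroup hχ] at hhalf
    rw [← scPow_one ρ, ← show (1 / 2 + 1 / 2 : ℂ) = 1 by norm_num, ← scPow_mul_scPow,
      Pi.mul_apply, norm_mul, hhalf, mul_one]
  have hdisc : ∀ z, scPow ρ z * φ = scPow ρ (z + 1 / 2) * χ := fun z => by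
    rw [← mul_assoc, scPow_mul_scPow]
  have hψφ : scPow ρ (1 / 2) * φ = ψ := by
    rw [hdisc, show (1 / 2 + 1 / 2 : ℂ) = 1 by norm_num, scPow_one, ← hψχ]
  have heq := (hψφ ▸ hψ).scPow_mul_eq ⟨hρ, hρX⟩
    ⟨mul_mem_Shat (scPow_mem_Shat hρ (by norm_num)) hχ.1, hφX⟩ (by norm_num)
    (z := 3 / 2) (by norm_num)
  rw [hdisc, hdisc, show (3 / 2 + 1 / 2 : ℂ) = 2 by norm_num,
    show (1 / 2 + 1 / 2 : ℂ) = 1 by norm_num, scPow_one] at heq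
  have h := congrFun heq s₀
  have hχ₀ : χ s₀ ≠ 0 := norm_ne_zero_iff.mp (by rw [hχ.2 s₀]; exact one_ne_zero)
  simp only [Pi.mul_apply, scPow, if_neg hs₀.1, cpow_ofNat] at h
  rw [sq] at h
  exact hs₀.2 ((mul_eq_left₀ hs₀.1).mp (mul_right_cancel₀ hχ₀ h))

end AnalyticDisc

/-- The strong boundary `Γ` of `A(Ŝ)` is a disjoint union of maximal
subgroups of `Ŝ`: for `ψ ∈ Γ` one has `|ψ| ∈ E(Ŝ)` and `|ψ|X ⊆ Γ`; consequently
`Γ = ⋃_{ρ ∈ F} ρX` with `F = {|ψ| : ψ ∈ Γ} ⊆ E(Ŝ)`, the union being disjoint. -/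
theorem stmt7 {S : Type*} [CommMonoid S] [IsCancelMul S] :
    (∀ ψ ∈ strongBoundary S,
      scMod ψ ∈ idemSC S ∧ cosetX S (scMod ψ) ⊆ strongBoundary S) ∧
    (strongBoundary S = ⋃ ρ ∈ (scMod '' strongBoundary S), cosetX S ρ) ∧
    (∀ ρ₁ ∈ scMod '' strongBoundary S, ∀ ρ₂ ∈ scMod '' strongBoundary S,
      ρ₁ ≠ ρ₂ → Disjoint (cosetX S ρ₁) (cosetX S ρ₂)) := by
  refine ⟨fun ψ hψ => ⟨IsPPointA.scMod_mem_idemSC hψ, IsPPointA.cosetX_scMod_subset hψ⟩, ?_, ?_⟩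
  · ext φ
    simp only [Set.mem_iUnion, Set.mem_image, exists_prop]
    constructor
    · exact fun hφ => ⟨scMod φ, ⟨φ, hφ, rfl⟩, mem_cosetX_scMod hφ.1⟩
    · rintro ⟨_, ⟨ψ, hψ, rfl⟩, hφ⟩
      exact IsPPointA.cosetX_scMod_subset hψ hφ
  · rintro _ ⟨ψ₁, -, rfl⟩ _ ⟨ψ₂, -, rfl⟩ hne
    refine Set.disjoint_left.mpr fun φ h₁ h₂ => hne ?_
    rw [← scMod_scMod ψ₁, ← scMod_eq_of_mem_cosetX h₁, scMod_eq_of_mem_cosetX h₂, scMod_scMod]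
end
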